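/- For every n ≥ 1 one has R_n(i) ≠ 0 (evaluation in ℂ at the imaginary unit i). -/

import Mathlib

open MeasureTheory Polynomial

/-- Evaluation of a real polynomial at a complex point. -/
noncomputable def evC (p : Polynomial ℝ) (z : ℂ) : ℂ :=
  (p.map (algebraMap ℝ ℂ)).eval z

/-- Evaluation of the derivative of a real polynomial at a complex point. -/
noncomputable def devC (p : Polynomial ℝ) (z : ℂ) : ℂ :=
  (Polynomial.derivative (p.map (algebraMap ℝ ℂ))).eval z

/-- The (topological) support of a measure on ℝ: points all of whose
neighborhoods have nonzero measure. -/
def measSupport (μ : Measure ℝ) : Set ℝ := {x | ∀ U ∈ nhds x, μ U ≠ 0}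

open Filter Finset

lemma sq_dvd_of_isRoot' {K : Type*} [CommRing K] (p : K[X]) (a : K)
    (h1 : p.eval a = 0) (h2 : p.derivative.eval a = 0) : (X - C a)^2 ∣ p := by
  obtain ⟨g, hg⟩ := (dvd_iff_isRoot).mpr h1
  have hder : p.derivative = (X - C a) * g.derivative + g := by
    rw [hg, derivative_mul]; simp; ring
  have hga : g.eval a = 0 := by
    have := congrArg (eval a) hder
    simpa [h2] using this.symm
  obtain ⟨h, hh⟩ := (dvd_iff_isRoot).mpr hga
  exact ⟨h, by rw [hg, hh]; ring⟩

lemma coeff_comp_neg {R : Type*} [CommRing R] (p : R[X]) (i : ℕ) :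
    (p.comp (-X)).coeff i = (-1)^i * p.coeff i := by
  induction p using Polynomial.induction_on' with
  | add p q hp hq => simp [add_comp, hp, hq, mul_add]
  | monomial n a =>
    have hC : ((-1 : R[X])^n) = C ((-1:R)^n) := by
      rw [map_pow, map_neg, map_one]
    rw [← C_mul_X_pow_eq_monomial, mul_comp, C_comp, pow_comp, X_comp, neg_pow, hC]
    by_cases h : i = n
    · subst h
      rw [coeff_C_mul, coeff_C_mul, coeff_C_mul, coeff_X_pow]
      simp [mul_comm, mul_assoc, mul_left_comm]
    · rw [coeff_C_mul, coeff_C_mul, coeff_C_mul, coeff_X_pow]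
      simp [h]


lemma even_comp_sq (p : Polynomial ℝ) (h : ∀ i, Odd i → p.coeff i = 0) :
    ∃ q : Polynomial ℝ, p = q.comp (X^2) := by
  refine ⟨∑ j ∈ Finset.range (p.natDegree + 1), C (p.coeff (2*j)) * X^j, ?_⟩
  have hcomp : (∑ j ∈ Finset.range (p.natDegree + 1), C (p.coeff (2*j)) * X^j).comp (X^2)
      = ∑ j ∈ Finset.range (p.natDegree + 1), C (p.coeff (2*j)) * X^(2*j) := by
    rw [Polynomial.comp, eval₂_finset_sum]
    refine Finset.sum_congr rfl fun j _ => ?_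
    rw [eval₂_mul, eval₂_C, eval₂_X_pow, ← pow_mul, Nat.mul_comm]
  rw [hcomp]
  ext i
  rw [finset_sum_coeff]
  by_cases hev : Even i
  · obtain ⟨l, hl⟩ := hev
    have hl2 : i = 2 * l := by omega
    have hterm : ∀ j ∈ Finset.range (p.natDegree + 1),
        (C (p.coeff (2*j)) * X^(2*j)).coeff i = if j = l then p.coeff (2*j) else 0 := by
      intro j _
      rw [coeff_C_mul, coeff_X_pow]
      by_cases hj : j = l
      · simp [hj, hl2]
      · have : ¬ (i = 2*j) := by omega
        simp [this, hj]
    rw [Finset.sum_congr rfl hterm, Finset.sum_ite_eq' (Finset.range (p.natDegree + 1)) l]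
    by_cases hmem : l ∈ Finset.range (p.natDegree + 1)
    · simp [hmem, ← hl2]
    · have hgt : p.natDegree < i := by
        simp only [Finset.mem_range] at hmem; omega
      simp [hmem, coeff_eq_zero_of_natDegree_lt hgt]
  · have hodd : Odd i := Nat.not_even_iff_odd.mp hev
    rw [h i hodd]
    refine (Finset.sum_eq_zero fun j _ => ?_).symm
    rw [coeff_C_mul, coeff_X_pow]
    have : ¬ (i = 2*j) := by
      intro hc; exact hev ⟨j, by omega⟩
    simp [this]


lemma integral_poly_pos (μ : Measure ℝ) (hsupp : (measSupport μ).Infinite)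
    (hint : ∀ p : Polynomial ℝ, Integrable (fun x => p.eval x) μ)
    (p : Polynomial ℝ) (hp0 : p ≠ 0) (hpos : ∀ x, 0 ≤ p.eval x) :
    0 < ∫ x, p.eval x ∂μ := by
  obtain ⟨x₀, hx₀s, hx₀r⟩ : ∃ x₀, x₀ ∈ measSupport μ ∧ ¬ p.IsRoot x₀ := by
    have := (hsupp.diff (p.finite_setOf_isRoot hp0)).nonempty
    obtain ⟨x, hx⟩ := this
    exact ⟨x, hx.1, hx.2⟩
  have hx₀pos : 0 < p.eval x₀ := lt_of_le_of_ne (hpos x₀) (Ne.symm hx₀r)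
  rw [integral_pos_iff_support_of_nonneg_ae (Filter.Eventually.of_forall hpos) (hint p)]
  have hU : (fun x => p.eval x) ⁻¹' (Set.Ioi 0) ∈ nhds x₀ :=
    (isOpen_Ioi.preimage p.continuous).mem_nhds (by simpa using hx₀pos)
  have hμU := hx₀s _ hU
  have hsub : (fun x => p.eval x) ⁻¹' (Set.Ioi 0) ⊆ Function.support fun x => p.eval x := by
    intro x hx; exact ne_of_gt hx
  exact lt_of_lt_of_le (pos_iff_ne_zero.mpr hμU) (measure_mono hsub)


lemma rootstruct : ∀ (k : ℕ) (q : Polynomial ℝ), q.natDegree = k → q.Monic →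
    (∀ f g : Polynomial ℝ, f.Monic → q = f * g → 1 ≤ f.natDegree →
      (∀ t : ℝ, 0 ≤ t → 0 ≤ f.eval t) → False) →
    q.eval (-1) ≠ 0 ∧ q.derivative.eval (-1) * q.eval (-1) ≤ 0 := by
  intro k
  induction k using Nat.strong_induction_on with
  | _ k IH =>
    intro q hdeg hq H
    rcases Nat.eq_zero_or_pos k with hk0 | hkpos
    · have hq1 : q = 1 := hq.natDegree_eq_zero.mp (by omega)
      subst hq1; norm_num
    · have hroot : ∃ r : ℝ, q.eval r = 0 := by
        by_contra hno; push_neg at hno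
        have hdegpos : 0 < q.degree := by
          rw [degree_eq_natDegree hq.ne_zero, hdeg]
          exact_mod_cast hkpos
        have hpos : ∀ x : ℝ, 0 < q.eval x := by
          by_contra hneg; push_neg at hneg; obtain ⟨x, hx⟩ := hneg
          have htop : Tendsto (fun x => q.eval x) atTop atTop :=
            q.tendsto_atTop_of_leadingCoeff_nonneg hdegpos
              (by rw [hq.leadingCoeff]; norm_num)
          obtain ⟨y, hxy, hy⟩ := ((eventually_ge_atTop x).and (htop.eventually_gt_atTop 0)).exists
          have hmem : (0:ℝ) ∈ Set.Icc (q.eval x) (q.eval y) := ⟨hx, hy.le⟩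
          obtain ⟨z, _, hz⟩ := intermediate_value_Icc hxy q.continuous.continuousOn hmem
          exact hno z hz
        exact H q 1 hq (mul_one q).symm (by omega) (fun t _ => (hpos t).le)
      obtain ⟨r, hr⟩ := hroot
      have hfac : q = (X - C r) * (q /ₘ (X - C r)) := (mul_divByMonic_eq_iff_isRoot.mpr hr).symm
      set g := q /ₘ (X - C r) with hgdef
      have hrpos : (0:ℝ) ≤ r := by
        by_contra hrneg; push_neg at hrneg
        refine H (X - C r) g (monic_X_sub_C r) hfac (by simp) ?_
        intro t ht; simp only [eval_sub, eval_X, eval_C]; linarith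
      have hgmonic : g.Monic := (monic_X_sub_C r).of_mul_monic_left (hfac ▸ hq)
      have hgdeg : g.natDegree = k - 1 := by
        have h1 := natDegree_mul (monic_X_sub_C r).ne_zero hgmonic.ne_zero
        rw [← hfac, hdeg, natDegree_X_sub_C] at h1
        omega
      have IHg := IH (k-1) (by omega) g hgdeg hgmonic ?_
      · obtain ⟨hc1, hd1⟩ := IHg
        have e1 : q.eval (-1) = (-1 - r) * g.eval (-1) := by
          rw [hfac]; simp
        have e2 : q.derivative.eval (-1) = g.eval (-1) + (-1 - r) * g.derivative.eval (-1) := by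
          rw [hfac, derivative_mul]; simp
        constructor
        · rw [e1]; exact mul_ne_zero (by linarith) hc1
        · rw [e1, e2]
          nlinarith [sq_nonneg (g.eval (-1)), sq_nonneg (1+r),
            mul_nonneg (sq_nonneg (-1-r)) (neg_nonneg.mpr hd1)]
      · intro f g' hf hgg' hfdeg hfnn
        exact H f ((X - C r) * g') hf (by rw [hfac, hgg']; ring) hfdeg hfnn


lemma orth_low (μ : Measure ℝ)
    (hint : ∀ p : Polynomial ℝ, Integrable (fun x => p.eval x) μ)
    (P : ℕ → Polynomial ℝ)
    (hPmonic : ∀ n, (P n).Monic)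
    (hPdeg : ∀ n, (P n).natDegree = n)
    (hPorth : ∀ m n, m ≠ n → ∫ x, (P m).eval x * (P n).eval x ∂μ = 0) :
    ∀ (j : ℕ) (U : Polynomial ℝ), (U = 0 ∨ U.natDegree < j) →
      ∫ x, ((P j) * U).eval x ∂μ = 0 := by
  have hP0 : P 0 = 1 := (hPmonic 0).natDegree_eq_zero.mp (hPdeg 0)
  suffices Hmain : ∀ d (j : ℕ) (U : Polynomial ℝ), U.natDegree ≤ d → U.natDegree < j →
      ∫ x, ((P j) * U).eval x ∂μ = 0 by
    rintro j U (rfl | h)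
    · simp
    · exact Hmain U.natDegree j U le_rfl h
  intro d
  induction d with
  | zero =>
    intro j U hUd hUj
    have hU : U = C (U.coeff 0) := Polynomial.eq_C_of_natDegree_le_zero hUd
    have hfun : (fun x => ((P j) * U).eval x)
        = fun x => ((P j).eval x * (P 0).eval x) * U.coeff 0 := by
      funext x
      rw [hU]; simp [hP0]
    rw [hfun, integral_mul_const, hPorth j 0 (by omega), zero_mul]
  | succ d IHd =>
    intro j U hUd hUj
    by_cases hle : U.natDegree ≤ d
    · exact IHd j U hle hUj
    · have hUdeg : U.natDegree = d + 1 := by omega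
      set c := U.coeff (d+1) with hc
      set V := U - C c * P (d+1) with hV
      have hVdeg : V.natDegree ≤ d := by
        rw [natDegree_le_iff_coeff_eq_zero]
        intro i hi
        rw [hV, coeff_sub, coeff_C_mul]
        by_cases hi1 : i = d + 1
        · subst hi1
          have : (P (d+1)).coeff (d+1) = 1 := by
            have := (hPmonic (d+1)).coeff_natDegree
            rwa [hPdeg (d+1)] at this
          rw [this, hc, mul_one, sub_self]
        · have h1 : U.coeff i = 0 := coeff_eq_zero_of_natDegree_lt (by omega)
          have h2 : (P (d+1)).coeff i = 0 := coeff_eq_zero_of_natDegree_lt (by rw [hPdeg]; omega)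
          rw [h1, h2, mul_zero, sub_zero]
      have hsplit : (fun x => ((P j) * U).eval x)
          = (fun x => ((P j) * V).eval x + ((P j).eval x * (P (d+1)).eval x) * c) := by
        funext x
        simp only [hV, eval_mul, eval_sub, eval_C]
        ring
      rw [hsplit, integral_add (hint _) ?_]
      · rw [IHd j V hVdeg (by omega), integral_mul_const, hPorth j (d+1) (by omega), zero_mul,
          add_zero]
      · have : (fun x => ((P j).eval x * (P (d+1)).eval x) * c)
            = fun x => ((P j) * (P (d+1)) * C c).eval x := by
          funext x; simp
        rw [this]; exact hint _


lemma conj_eval (p : Polynomial ℝ) (z : ℂ) :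
    (p.map (algebraMap ℝ ℂ)).eval (starRingEnd ℂ z)
      = starRingEnd ℂ ((p.map (algebraMap ℝ ℂ)).eval z) := by
  rw [eval_map, eval_map, hom_eval₂]
  congr 1
  ext r
  simp [Complex.conj_ofReal]

lemma sq_sq_dvd (p : Polynomial ℝ) (h1 : evC p Complex.I = 0) (h2 : devC p Complex.I = 0) :
    (X^2+1)^2 ∣ p := by
  set f := algebraMap ℝ ℂ
  set pC := p.map f with hpC
  simp only [evC] at h1
  simp only [devC] at h2
  have hd1 : (X - C Complex.I)^2 ∣ pC := sq_dvd_of_isRoot' pC Complex.I h1 h2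
  have hmI : starRingEnd ℂ Complex.I = -Complex.I := Complex.conj_I
  have h1' : pC.eval (-Complex.I) = 0 := by
    rw [← hmI, conj_eval, h1, map_zero]
  have h2' : pC.derivative.eval (-Complex.I) = 0 := by
    have hdm : pC.derivative = (p.derivative).map f := by
      rw [hpC, derivative_map]
    rw [hdm, ← hmI, conj_eval]
    rw [hdm] at h2
    rw [h2, map_zero]
  have hd2 : (X - C (-Complex.I))^2 ∣ pC := sq_dvd_of_isRoot' pC (-Complex.I) h1' h2'
  have hcop : IsCoprime (X - C Complex.I) (X - C (-Complex.I)) :=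
    isCoprime_X_sub_C_of_isUnit_sub (by
      rw [sub_neg_eq_add]
      exact isUnit_iff_ne_zero.mpr (by simp [Complex.I_ne_zero, two_ne_zero]))
  have hmul : ((X - C Complex.I) * (X - C (-Complex.I)))^2 ∣ pC := by
    rw [mul_pow]
    exact (hcop.pow).mul_dvd hd1 hd2
  have hXX : (X - C Complex.I) * (X - C (-Complex.I)) = X^2 + 1 := by
    rw [map_neg, sub_neg_eq_add]
    have h5 : (X - C Complex.I) * (X + C Complex.I) = X^2 - C Complex.I * C Complex.I := by
      ring
    rw [h5, ← C_mul, Complex.I_mul_I, map_neg, map_one, sub_neg_eq_add]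
  rw [hXX] at hmul
  have hmap : ((X^2+1 : Polynomial ℝ)^2).map f = (X^2+1 : Polynomial ℂ)^2 := by
    simp [Polynomial.map_pow, Polynomial.map_add, Polynomial.map_one]
  refine (map_dvd_map' f).mp ?_
  rw [hmap]
  exact hmul


lemma comp_sq_ne_zero (p : Polynomial ℝ) (hp : p ≠ 0) : p.comp (X^2) ≠ 0 := by
  have h2 : ((X : Polynomial ℝ)^2).natDegree ≠ 0 := by
    rw [natDegree_X_pow]; omega
  intro hcon
  have := leadingCoeff_comp (p := p) h2
  rw [hcon, leadingCoeff_zero] at this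
  have hX : ((X : Polynomial ℝ)^2).leadingCoeff = 1 := by
    rw [leadingCoeff_X_pow]
  rw [hX, one_pow, mul_one] at this
  exact hp (leadingCoeff_eq_zero.mp this.symm)

lemma core (μ : Measure ℝ) (hsupp : (measSupport μ).Infinite)
    (hint : ∀ p : Polynomial ℝ, Integrable (fun x => p.eval x) μ)
    (k : ℕ) (q BB NN : Polynomial ℝ) (hq : q.Monic) (hk : q.natDegree = k)
    (hBpos : ∀ x : ℝ, 0 ≤ BB.eval x) (hB0 : BB ≠ 0)
    (hN1 : 0 < NN.eval (-1)) (hN2 : 0 ≤ NN.derivative.eval (-1)) (hNdeg : NN.natDegree ≤ 1)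
    (horth : ∀ u : Polynomial ℝ, (u = 0 ∨ u.natDegree < k) →
      ∫ x, (BB * (X^2+1)^2 * (q.comp (X^2)) * (u.comp (X^2))).eval x ∂μ = 0)
    (hextra : ∫ x, (BB * (NN.comp (X^2)) * (q.comp (X^2))).eval x ∂μ = 0) : False := by
  -- Step 1: root structure of q
  have H : ∀ f g : Polynomial ℝ, f.Monic → q = f * g → 1 ≤ f.natDegree →
      (∀ t : ℝ, 0 ≤ t → 0 ≤ f.eval t) → False := by
    intro f g hf hfg hfdeg hfnn
    have hg0 : g ≠ 0 := by
      intro hg; rw [hfg, hg, mul_zero] at hq; exact hq.ne_zero rfl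
    have hgdeg : g.natDegree < k := by
      have := natDegree_mul hf.ne_zero hg0
      rw [← hfg, hk] at this
      omega
    have h0 := horth g (Or.inr hgdeg)
    have hpoly : BB * (X^2+1)^2 * (q.comp (X^2)) * (g.comp (X^2))
        = BB * (X^2+1)^2 * (f.comp (X^2)) * (g.comp (X^2))^2 := by
      rw [hfg, mul_comp]; ring
    rw [hpoly] at h0
    refine absurd h0 (ne_of_gt (integral_poly_pos μ hsupp hint
      (BB * (X^2+1)^2 * (f.comp (X^2)) * (g.comp (X^2))^2) ?_ ?_))
    · have hX1 : ((X^2+1 : Polynomial ℝ))^2 ≠ 0 := by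
        intro hcon
        have := congrArg (eval 0) hcon
        simp at this
      exact mul_ne_zero (mul_ne_zero (mul_ne_zero hB0 hX1)
        (comp_sq_ne_zero f hf.ne_zero)) (pow_ne_zero 2 (comp_sq_ne_zero g hg0))
    · intro x
      simp only [eval_mul, eval_pow, eval_add, eval_one, eval_X, eval_comp]
      have h5 : (0:ℝ) ≤ f.eval (x^2) := hfnn _ (sq_nonneg x)
      exact mul_nonneg (mul_nonneg (mul_nonneg (hBpos x) (by positivity)) h5) (sq_nonneg _)
  obtain ⟨hc, hdc⟩ := rootstruct k q hk hq H
  set c := q.eval (-1) with hcdef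
  set d := q.derivative.eval (-1) with hddef
  set N1 := NN.eval (-1) with hN1def
  set N2 := NN.derivative.eval (-1) with hN2def
  -- Step 2: the affine multiplier M
  set M : Polynomial ℝ := C (c*N1) + C (c*N2 - d*N1) * (X + 1) with hMdef
  have hMeval : ∀ t : ℝ, M.eval t = c*N1 + (c*N2 - d*N1)*(t+1) := by
    intro t; simp [hMdef]
  have hMder : M.derivative = C (c*N2 - d*N1) := by
    simp [hMdef]
  set p₀ : Polynomial ℝ := C (c^2) * NN - q * M with hp₀def
  have hval : p₀.eval (-1) = 0 := by
    simp only [hp₀def, eval_sub, eval_mul, eval_C, hMeval]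
    rw [show ((-1:ℝ)) + 1 = 0 by ring]
    ring
  have hder : p₀.derivative.eval (-1) = 0 := by
    simp only [hp₀def, derivative_sub, derivative_mul, derivative_C, hMder]
    simp only [eval_sub, eval_add, eval_mul, eval_C, zero_mul, zero_add, hMeval]
    rw [show ((-1:ℝ)) + 1 = 0 by ring]
    ring
  obtain ⟨L, hL⟩ := sq_dvd_of_isRoot' p₀ (-1) hval hder
  have hXp1 : (X - C (-1 : ℝ)) = X + 1 := by
    rw [map_neg, map_one, sub_neg_eq_add]
  rw [hXp1] at hL
  -- Step 3: degree bound for L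
  have hMdeg : M.natDegree ≤ 1 := by
    apply le_trans (natDegree_add_le _ _)
    simp only [natDegree_C, max_le_iff]
    constructor
    · omega
    · apply le_trans (natDegree_mul_le)
      have : ((X : Polynomial ℝ) + 1).natDegree ≤ 1 := by
        apply le_trans (natDegree_add_le _ _)
        simp
      simp only [natDegree_C]
      omega
  have hLbound : L = 0 ∨ L.natDegree < k := by
    by_cases hL0 : L = 0
    · exact Or.inl hL0
    · right
      have hp₀ne : p₀ ≠ 0 := by
        rw [hL]
        exact mul_ne_zero (pow_ne_zero 2 (by
          intro hcon
          have := congrArg (eval 0) hcon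
          simp at this)) hL0
      have hdeg1 : p₀.natDegree = 2 + L.natDegree := by
        rw [hL, natDegree_mul (pow_ne_zero 2 ?_) hL0, natDegree_pow]
        · have : ((X : Polynomial ℝ) + 1).natDegree = 1 := by
            have : ((X : Polynomial ℝ) + 1) = X + C 1 := by simp
            rw [this, natDegree_X_add_C]
          omega
        · intro hcon
          have := congrArg (eval 0) hcon
          simp at this
      have hdeg2 : p₀.natDegree ≤ k + 1 := by
        apply le_trans (natDegree_sub_le _ _)
        have h1 : (C (c^2) * NN).natDegree ≤ 1 := by
          apply le_trans (natDegree_mul_le)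
          simp only [natDegree_C]
          omega
        have h2 : (q * M).natDegree ≤ k + 1 := by
          apply le_trans (natDegree_mul_le)
          omega
        omega
      omega
  -- Step 4: rewrite the extra integral
  have hNNid : C (c^2) * NN = (X+1)^2 * L + q * M := by
    rw [← hL, hp₀def]; ring
  have hKEY : C (c^2) * (BB * (NN.comp (X^2)) * (q.comp (X^2)))
      = BB * (X^2+1)^2 * (q.comp (X^2)) * (L.comp (X^2))
        + BB * (q.comp (X^2))^2 * (M.comp (X^2)) := by
    have h1 : (C (c^2) * NN).comp (X^2) = ((X+1)^2 * L + q * M).comp (X^2) := by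
      rw [hNNid]
    simp only [mul_comp, add_comp, pow_comp, X_comp, one_comp, C_comp] at h1
    have h2 : C (c^2) * (NN.comp (X^2)) = (X^2+1)^2 * (L.comp (X^2))
        + (q.comp (X^2)) * (M.comp (X^2)) := h1
    calc C (c^2) * (BB * (NN.comp (X^2)) * (q.comp (X^2)))
        = BB * (C (c^2) * (NN.comp (X^2))) * (q.comp (X^2)) := by ring
      _ = _ := by rw [h2]; ring
  have hsplit : (fun x : ℝ => (C (c^2) * (BB * (NN.comp (X^2)) * (q.comp (X^2)))).eval x)
      = (fun x : ℝ => (BB * (X^2+1)^2 * (q.comp (X^2)) * (L.comp (X^2))).eval x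
          + (BB * (q.comp (X^2))^2 * (M.comp (X^2))).eval x) := by
    funext x; rw [hKEY]; simp [eval_add]
  have hext2 : ∫ x, (BB * (q.comp (X^2))^2 * (M.comp (X^2))).eval x ∂μ = 0 := by
    have e1 : ∫ x, (C (c^2) * (BB * (NN.comp (X^2)) * (q.comp (X^2)))).eval x ∂μ = 0 := by
      have : (fun x : ℝ => (C (c^2) * (BB * (NN.comp (X^2)) * (q.comp (X^2)))).eval x)
          = fun x : ℝ => c^2 * (BB * (NN.comp (X^2)) * (q.comp (X^2))).eval x := by
        funext x; simp
      rw [this, integral_const_mul, hextra, mul_zero]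
    rw [hsplit] at e1
    rw [integral_add (hint _) (hint _), horth L hLbound, zero_add] at e1
    exact e1
  -- Step 5: sign of M on [0,∞)
  set σ : ℝ := if 0 < c then 1 else -1 with hσdef
  have hσc : 0 < σ * c := by
    rcases lt_or_gt_of_ne hc with h | h
    · rw [hσdef, if_neg (by linarith)]; linarith
    · rw [hσdef, if_pos h]; linarith
  have hσne : σ ≠ 0 := by
    intro h; rw [h, zero_mul] at hσc; linarith
  have hdσ : 0 ≤ -(d*σ) := by
    rcases lt_or_gt_of_ne hc with h | h
    · rw [hσdef, if_neg (by linarith)]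
      nlinarith
    · rw [hσdef, if_pos h]
      nlinarith
  have hMpos : ∀ t : ℝ, 0 ≤ t → 0 < σ * M.eval t := by
    intro t ht
    rw [hMeval]
    nlinarith [mul_pos hσc hN1, mul_nonneg (mul_nonneg hσc.le hN2) (by linarith : (0:ℝ) ≤ t+1),
      mul_nonneg (mul_nonneg hdσ hN1.le) (by linarith : (0:ℝ) ≤ t+1)]
  -- Step 6: final contradiction
  set pp : Polynomial ℝ := C σ * (BB * (q.comp (X^2))^2 * (M.comp (X^2))) with hppdef
  have hppint : ∫ x, pp.eval x ∂μ = 0 := by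
    have : (fun x : ℝ => pp.eval x)
        = fun x : ℝ => σ * (BB * (q.comp (X^2))^2 * (M.comp (X^2))).eval x := by
      funext x; simp [hppdef]
    rw [this, integral_const_mul, hext2, mul_zero]
  have hM0 : M ≠ 0 := by
    intro h
    have := hMpos 0 le_rfl
    rw [h] at this; simp at this
  have hpppos : 0 < ∫ x, pp.eval x ∂μ := by
    apply integral_poly_pos μ hsupp hint
    · refine mul_ne_zero (by simpa using hσne) (mul_ne_zero (mul_ne_zero hB0 ?_) ?_)
      · exact pow_ne_zero 2 (comp_sq_ne_zero q hq.ne_zero)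
      · exact comp_sq_ne_zero M hM0
    · intro x
      have h1 : pp.eval x = (BB.eval x * (q.eval (x^2))^2) * (σ * M.eval (x^2)) := by
        simp only [hppdef, eval_mul, eval_C, eval_pow, eval_comp, eval_add, eval_X, eval_one]
        ring
      rw [h1]
      exact mul_nonneg (mul_nonneg (hBpos x) (sq_nonneg _)) (hMpos _ (sq_nonneg x)).le
  rw [hppint] at hpppos
  exact lt_irrefl 0 hpppos


lemma degree_C_mul_le' (a : ℝ) (p : Polynomial ℝ) : (C a * p).degree ≤ p.degree := by
  calc (C a * p).degree ≤ (C a).degree + p.degree := degree_mul_le _ _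
  _ ≤ 0 + p.degree := add_le_add degree_C_le le_rfl
  _ = p.degree := zero_add _

/-- Proposition 2.5: R_n(i) ≠ 0 for every n ≥ 1. -/
theorem stmt_3
    (μ : Measure ℝ)
    (hsymm : μ.map (fun x => -x) = μ)
    (hsupp : (measSupport μ).Infinite)
    (hint : ∀ p : Polynomial ℝ, Integrable (fun x => p.eval x) μ)
    (P : ℕ → Polynomial ℝ)
    (hPmonic : ∀ n, (P n).Monic)
    (hPdeg : ∀ n, (P n).natDegree = n)
    (hPorth : ∀ m n, m ≠ n → ∫ x, (P m).eval x * (P n).eval x ∂μ = 0)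
    (hPparity : ∀ n x, (P n).eval (-x) = (-1 : ℝ)^n * (P n).eval x)
    (A B : ℕ → ℝ) (R : ℕ → Polynomial ℝ)
    (hR0 : R 0 = 1)
    (hR1 : R 1 = P 3 + Polynomial.C (A 1) * P 1)
    (hRn : ∀ n, 2 ≤ n →
      R n = P (n+2) + Polynomial.C (A n) * P n + Polynomial.C (B n) * P (n-2))
    (hRi : ∀ n, 1 ≤ n → devC (R n) Complex.I = 0)
    (hRii : ∀ n, 1 ≤ n → ∫ x, (R n).eval x / (1+x^2)^2 ∂μ = 0)
    (hRiii : ∀ n, 2 ≤ n → ∫ x, (R 1).eval x * (R n).eval x / (1+x^2)^2 ∂μ = 0)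
    :
    ∀ n : ℕ, 1 ≤ n → evC (R n) Complex.I ≠ 0 := by
  have hdegP : ∀ j : ℕ, (P j).degree = (j : ℕ) := fun j => by
    rw [degree_eq_natDegree (hPmonic j).ne_zero, hPdeg j]
  -- ====== Shape of R 1 ======
  have hR1monic : (R 1).Monic := by
    rw [hR1]
    refine (hPmonic 3).add_of_left ?_
    refine lt_of_le_of_lt (degree_C_mul_le' _ _) ?_
    rw [hdegP 1, hdegP 3]
    exact_mod_cast (by norm_num : (1:ℕ) < 3)
  have hR1deg : (R 1).natDegree = 3 := by
    have h1 : (R 1).degree = 3 := by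
      rw [hR1, degree_add_eq_left_of_degree_lt, hdegP 3]
      · norm_num
      · refine lt_of_le_of_lt (degree_C_mul_le' _ _) ?_
        rw [hdegP 1, hdegP 3]
        exact_mod_cast (by norm_num : (1:ℕ) < 3)
    exact natDegree_eq_of_degree_eq_some h1
  have hR1odd : ∀ x : ℝ, (R 1).eval (-x) = - (R 1).eval x := by
    intro x
    rw [hR1]
    simp only [eval_add, eval_mul, eval_C, hPparity 3 x, hPparity 1 x]
    ring_nf
  have hR1comp : (R 1).comp (-X) = -(R 1) := by
    apply Polynomial.funext
    intro r
    rw [eval_comp]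
    simp [hR1odd r]
  have hR1coeff : ∀ i, Even i → (R 1).coeff i = 0 := by
    intro i hi
    have h := congrArg (fun p => Polynomial.coeff p i) hR1comp
    simp only [coeff_comp_neg, coeff_neg] at h
    rw [hi.neg_one_pow, one_mul] at h
    linarith
  set b := (R 1).coeff 1 with hbdef
  have hR1shape : R 1 = X^3 + C b * X := by
    ext i
    match i with
    | 0 =>
      rw [hR1coeff 0 Even.zero]
      simp
    | 1 =>
      simp [coeff_X_pow, hbdef]
    | 2 =>
      rw [hR1coeff 2 (by norm_num)]
      simp [coeff_X_pow]
    | 3 =>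
      have := hR1monic.coeff_natDegree
      rw [hR1deg] at this
      rw [this]
      simp [coeff_X_pow]
    | (m+4) =>
      rw [coeff_eq_zero_of_natDegree_lt (by omega : (R 1).natDegree < m + 4)]
      simp [coeff_X_pow]
  have hb3 : (b : ℂ) = 3 := by
    have hdev := hRi 1 le_rfl
    rw [hR1shape] at hdev
    simp only [devC, Polynomial.map_add, Polynomial.map_pow, Polynomial.map_mul,
      Polynomial.map_X, map_C, derivative_add, derivative_mul, derivative_C,
      derivative_X, derivative_pow] at hdev
    simp only [eval_add, eval_mul, eval_pow, eval_X, eval_C, eval_one, eval_zero,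
      zero_mul, zero_add, mul_one, Complex.coe_algebraMap] at hdev
    norm_num [Complex.I_sq] at hdev
    linear_combination hdev
  have hR1X : R 1 = X^3 + C 3 * X := by
    have hb3' : b = 3 := by exact_mod_cast hb3
    rw [hR1shape, hb3']
  -- ====== Main proof ======
  intro n hn1
  by_cases hn1' : n = 1
  · subst hn1'
    rw [hR1X]
    simp only [evC, Polynomial.map_add, Polynomial.map_pow, Polynomial.map_mul,
      Polynomial.map_X, map_C, eval_add, eval_pow, eval_mul, eval_X, eval_C]
    intro hcon
    rw [show (algebraMap ℝ ℂ) 3 = (3:ℂ) by norm_num] at hcon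
    norm_num [pow_succ, Complex.ext_iff, Complex.I_sq] at hcon
  · -- n ≥ 2
    have hn2 : 2 ≤ n := by omega
    intro heval
    have hReq := hRn n hn2
    -- R n is monic of degree n+2
    have hlowdeg : (C (A n) * P n + C (B n) * P (n-2)).degree < (P (n+2)).degree := by
      refine lt_of_le_of_lt (degree_add_le _ _) ?_
      rw [max_lt_iff]
      constructor
      · refine lt_of_le_of_lt (degree_C_mul_le' _ _) ?_
        rw [hdegP n, hdegP (n+2)]
        exact_mod_cast (by omega : n < n + 2)
      · refine lt_of_le_of_lt (degree_C_mul_le' _ _) ?_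
        rw [hdegP (n-2), hdegP (n+2)]
        exact_mod_cast (by omega : n - 2 < n + 2)
    have hReq' : R n = P (n+2) + (C (A n) * P n + C (B n) * P (n-2)) := by
      rw [hReq, add_assoc]
    have hRmonic : (R n).Monic := by
      rw [hReq']
      exact (hPmonic (n+2)).add_of_left hlowdeg
    have hRdeg : (R n).natDegree = n + 2 := by
      have h1 : (R n).degree = ((n+2 : ℕ) : WithBot ℕ) := by
        rw [hReq', degree_add_eq_left_of_degree_lt hlowdeg, hdegP (n+2)]
      exact natDegree_eq_of_degree_eq_some h1
    -- divisibility
    obtain ⟨S, hS⟩ := sq_sq_dvd (R n) heval (hRi n hn1)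
    have hX2ne : ((X^2+1 : Polynomial ℝ)) ≠ 0 := by
      intro hcon
      have := congrArg (eval 0) hcon
      simp at this
    have hX2monic : ((X^2+1 : Polynomial ℝ)^2).Monic := by
      have h1 : ((X:Polynomial ℝ)^2+1) = X^2 + C 1 := by simp
      rw [h1]
      exact (monic_X_pow_add_C (a := (1:ℝ)) two_ne_zero).pow 2
    have hSmonic : S.Monic := hX2monic.of_mul_monic_left (hS ▸ hRmonic)
    have hX2deg : ((X^2+1 : Polynomial ℝ)^2).natDegree = 4 := by
      rw [natDegree_pow]
      have h1 : ((X:Polynomial ℝ)^2+1) = X^2 + C 1 := by simp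
      rw [h1, natDegree_X_pow_add_C]
    have hSdeg : S.natDegree + 4 = n + 2 := by
      have h1 := natDegree_mul (pow_ne_zero 2 hX2ne) hSmonic.ne_zero
      rw [← hS, hRdeg, hX2deg] at h1
      omega
    -- parity of R n and S
    have hRpar : ∀ x : ℝ, (R n).eval (-x) = (-1:ℝ)^n * (R n).eval x := by
      intro x
      have e1 : (-1:ℝ)^(n+2) = (-1)^n := by rw [pow_add]; norm_num
      have e2 : (-1:ℝ)^(n-2) = (-1)^n := by
        conv_rhs => rw [show n = (n-2)+2 by omega]
        rw [pow_add]; norm_num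
      rw [hReq]
      simp only [eval_add, eval_mul, eval_C, hPparity, e1, e2]
      ring
    have hSpar : ∀ x : ℝ, S.eval (-x) = (-1:ℝ)^n * S.eval x := by
      intro x
      have h1 := hRpar x
      rw [hS] at h1
      simp only [eval_mul, eval_pow, eval_add, eval_one, eval_X, neg_sq] at h1
      have hne : ((x:ℝ)^2+1)^2 ≠ 0 := by positivity
      apply mul_left_cancel₀ hne
      rw [h1]
      ring
    have hScomp : S.comp (-X) = C ((-1:ℝ)^n) * S := by
      apply Polynomial.funext
      intro r
      rw [eval_comp]
      simp [hSpar r]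
    have hScoeff : ∀ i, (-1:ℝ)^i * S.coeff i = (-1:ℝ)^n * S.coeff i := by
      intro i
      have h := congrArg (fun p : Polynomial ℝ => Polynomial.coeff p i) hScomp
      rw [coeff_comp_neg, coeff_C_mul] at h
      exact h
    -- the low-degree orthogonality for R n
    have hRlow : ∀ U : Polynomial ℝ, (U = 0 ∨ U.natDegree + 3 ≤ n) →
        ∫ x, ((R n) * U).eval x ∂μ = 0 := by
      rintro U (rfl | hU)
      · simp
      · have hsplit : (fun x : ℝ => ((R n) * U).eval x)
            = fun x : ℝ => ((P (n+2)) * U).eval x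
              + (((P n) * (C (A n) * U)).eval x + ((P (n-2)) * (C (B n) * U)).eval x) := by
          funext x
          rw [hReq]
          simp only [eval_add, eval_mul, eval_C]
          ring
        rw [hsplit, integral_add (hint _) ?_]
        · rw [orth_low μ hint P hPmonic hPdeg hPorth (n+2) U (Or.inr (by omega)), zero_add,
            integral_add (hint _) (hint _),
            orth_low μ hint P hPmonic hPdeg hPorth n (C (A n) * U)
              (Or.inr (lt_of_le_of_lt (natDegree_C_mul_le _ _) (by omega))),
            orth_low μ hint P hPmonic hPdeg hPorth (n-2) (C (B n) * U)
              (Or.inr (lt_of_le_of_lt (natDegree_C_mul_le _ _) (by omega))),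
            zero_add]
        · have : (fun x : ℝ => ((P n) * (C (A n) * U)).eval x + ((P (n-2)) * (C (B n) * U)).eval x)
              = fun x : ℝ => ((P n) * (C (A n) * U) + (P (n-2)) * (C (B n) * U)).eval x := by
            funext x; simp
          rw [this]
          exact hint _
    rcases Nat.even_or_odd n with hev | hodd
    · -- EVEN CASE
      have hScoeffOdd : ∀ i, Odd i → S.coeff i = 0 := by
        intro i hi
        have h := hScoeff i
        rw [hi.neg_one_pow, hev.neg_one_pow] at h
        linarith
      obtain ⟨q, hq⟩ := even_comp_sq S hScoeffOdd
      have hqmonic : q.Monic := by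
        have h1 := hSmonic
        rw [hq] at h1
        have h2 := leadingCoeff_comp (p := q) (q := (X:Polynomial ℝ)^2) (by rw [natDegree_X_pow]; omega)
        rw [Monic, h2, leadingCoeff_X_pow, one_pow, mul_one] at h1
        exact h1
      set k := q.natDegree with hkdef
      have hSq : S.natDegree = 2 * k := by
        rw [hq, natDegree_comp, natDegree_X_pow]
        omega
      have hnk : n = 2*k + 2 := by omega
      have horth : ∀ u : Polynomial ℝ, (u = 0 ∨ u.natDegree < k) →
          ∫ x, ((1:Polynomial ℝ) * (X^2+1)^2 * (q.comp (X^2)) * (u.comp (X^2))).eval x ∂μ = 0 := by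
        rintro u (rfl | hu)
        · simp
        · have hU := hRlow (u.comp (X^2)) (Or.inr (by
            rw [natDegree_comp, natDegree_X_pow]; omega))
          rw [show (1:Polynomial ℝ) * (X^2+1)^2 * (q.comp (X^2)) * (u.comp (X^2))
              = (R n) * (u.comp (X^2)) from by rw [hS, hq]; ring]
          exact hU
      have hii := hRii n hn1
      have hiieq : (fun x : ℝ => (R n).eval x / (1+x^2)^2)
          = fun x : ℝ => ((1:Polynomial ℝ) * ((1:Polynomial ℝ).comp (X^2)) * (q.comp (X^2))).eval x := by
        funext x
        rw [hS, hq]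
        simp only [eval_mul, eval_pow, eval_add, eval_one, eval_X, eval_comp, one_mul, one_comp]
        have hne : ((1:ℝ)+x^2)^2 ≠ 0 := by positivity
        field_simp
        ring
      rw [hiieq] at hii
      exact core μ hsupp hint k q 1 1 hqmonic rfl (by intro x; simp) one_ne_zero
        (by simp) (by simp) (by simp) horth hii
    · -- ODD CASE
      have hScoeffEven : ∀ i, Even i → S.coeff i = 0 := by
        intro i hi
        have h := hScoeff i
        rw [hi.neg_one_pow, hodd.neg_one_pow] at h
        linarith
      obtain ⟨S1, hS1⟩ := X_dvd_iff.mpr (hScoeffEven 0 Even.zero)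
      have hS1monic : S1.Monic := monic_X.of_mul_monic_left (hS1 ▸ hSmonic)
      have hS1coeff : ∀ i, Odd i → S1.coeff i = 0 := by
        intro i hi
        have h := hScoeffEven (i+1) (by
          rcases hi with ⟨l, hl⟩
          exact ⟨l+1, by omega⟩)
        rw [hS1, coeff_X_mul] at h
        exact h
      obtain ⟨q, hq⟩ := even_comp_sq S1 hS1coeff
      have hqmonic : q.Monic := by
        have h1 := hS1monic
        rw [hq] at h1
        have h2 := leadingCoeff_comp (p := q) (q := (X:Polynomial ℝ)^2) (by rw [natDegree_X_pow]; omega)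
        rw [Monic, h2, leadingCoeff_X_pow, one_pow, mul_one] at h1
        exact h1
      set k := q.natDegree with hkdef
      have hS1deg : S1.natDegree = 2 * k := by
        rw [hq, natDegree_comp, natDegree_X_pow]
        omega
      have hSdeg1 : S.natDegree = 2*k + 1 := by
        rw [hS1, natDegree_mul X_ne_zero hS1monic.ne_zero, natDegree_X, hS1deg]
        omega
      have hnk : n = 2*k + 3 := by omega
      have horth : ∀ u : Polynomial ℝ, (u = 0 ∨ u.natDegree < k) →
          ∫ x, ((X^2 : Polynomial ℝ) * (X^2+1)^2 * (q.comp (X^2)) * (u.comp (X^2))).eval x ∂μ = 0 := by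
        rintro u (rfl | hu)
        · simp
        · have hU := hRlow (X * u.comp (X^2)) (Or.inr (by
            have hb1 : (X * u.comp (X^2)).natDegree ≤ 1 + u.natDegree * 2 := by
              refine le_trans natDegree_mul_le ?_
              rw [natDegree_X, natDegree_comp, natDegree_X_pow]
            omega))
          rw [show (X^2 : Polynomial ℝ) * (X^2+1)^2 * (q.comp (X^2)) * (u.comp (X^2))
              = (R n) * (X * u.comp (X^2)) from by rw [hS, hS1, hq]; ring]
          exact hU
      have hiii := hRiii n hn2
      have hiiieq : (fun x : ℝ => (R 1).eval x * (R n).eval x / (1+x^2)^2)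
          = fun x : ℝ => ((X^2 : Polynomial ℝ) * (((X + C 3 : Polynomial ℝ)).comp (X^2)) * (q.comp (X^2))).eval x := by
        funext x
        rw [hS, hS1, hq, hR1X]
        simp only [eval_mul, eval_pow, eval_add, eval_one, eval_X, eval_comp, eval_C, add_comp,
          X_comp, C_comp]
        have hne : ((1:ℝ)+x^2)^2 ≠ 0 := by positivity
        field_simp
        ring
      rw [hiiieq] at hiii
      refine core μ hsupp hint k q (X^2) (X + C 3) hqmonic rfl
        (by intro x; simp [sq_nonneg]) (by
          intro hcon
          have := congrArg (eval 1) hcon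
          simp at this)
        (by norm_num) (by simp) (by simp [natDegree_X_add_C]) horth hiii
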